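/- For all real numbers n, m satisfying one of: n ≥ 4 and m ≥ 7; n ≥ 6 and m ≥ 4; or n ≥ 8 and m ≥ 3, one has cos(π/m)/sin(π/n) ≥ 5/4. -/

import Mathlib

/-!
The ratio `cos (π / m) / sin (π / n)` is monotone in both `n` and `m`, so it suffices to check
the three corners `(4, 7)`, `(6, 4)` and `(8, 3)`; where no closed form is at hand we use
`1 - x ^ 2 / 2 ≤ cos x` and `sin x ≤ x`.
-/

open Real

lemma sin_pi_div_pos {n : ℝ} (hn : 2 ≤ n) : 0 < sin (π / n) :=
  sin_pos_of_pos_of_lt_pi (by positivity) <|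
    (div_le_div_of_nonneg_left pi_pos.le two_pos hn).trans_lt (by linarith [pi_pos])

lemma sin_pi_div_le_sin_pi_div {n₀ n : ℝ} (hn₀ : 2 ≤ n₀) (hn : n₀ ≤ n) :
    sin (π / n) ≤ sin (π / n₀) :=
  sin_le_sin_of_le_of_le_pi_div_two
    (by have := div_pos pi_pos (show 0 < n by linarith); linarith [pi_pos])
    (div_le_div_of_nonneg_left pi_pos.le two_pos hn₀)
    (div_le_div_of_nonneg_left pi_pos.le (by linarith) hn)

lemma cos_pi_div_le_cos_pi_div {m₀ m : ℝ} (hm₀ : 1 ≤ m₀) (hm : m₀ ≤ m) :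
    cos (π / m₀) ≤ cos (π / m) :=
  cos_le_cos_of_nonneg_of_le_pi (div_pos pi_pos (by linarith)).le
    (div_le_self pi_pos.le hm₀) (div_le_div_of_nonneg_left pi_pos.le (by linarith) hm)

lemma cos_pi_div_div_sin_pi_div_le {n₀ n m₀ m : ℝ} (hn₀ : 2 ≤ n₀) (hm₀ : 2 ≤ m₀)
    (hn : n₀ ≤ n) (hm : m₀ ≤ m) :
    cos (π / m₀) / sin (π / n₀) ≤ cos (π / m) / sin (π / n) :=
  div_le_div₀ (by simpa using cos_pi_div_le_cos_pi_div one_le_two (hm₀.trans hm))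
    (cos_pi_div_le_cos_pi_div (by linarith) hm) (sin_pi_div_pos (hn₀.trans hn))
    (sin_pi_div_le_sin_pi_div hn₀ hn)

lemma five_div_four_le_cos_pi_div_seven_div_sin_pi_div_four :
    5 / 4 ≤ cos (π / 7) / sin (π / 4) := by
  rw [sin_pi_div_four, le_div_iff₀ (by positivity)]
  have hcos : 1 - (π / 7) ^ 2 / 2 ≤ cos (π / 7) := one_sub_sq_div_two_le_cos
  have hsqrt : √2 < 1.4143 := by
    rw [sqrt_lt' (by norm_num)]
    norm_num
  nlinarith [pi_lt_d2, pi_pos, sqrt_nonneg 2]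

lemma five_div_four_le_cos_pi_div_four_div_sin_pi_div_six :
    5 / 4 ≤ cos (π / 4) / sin (π / 6) := by
  rw [sin_pi_div_six, cos_pi_div_four]
  nlinarith [sq_sqrt (zero_le_two : (0 : ℝ) ≤ 2), sqrt_nonneg 2]

lemma five_div_four_le_cos_pi_div_three_div_sin_pi_div_eight :
    5 / 4 ≤ cos (π / 3) / sin (π / 8) := by
  rw [cos_pi_div_three, le_div_iff₀ (sin_pi_div_pos (by norm_num))]
  nlinarith [sin_le (show 0 ≤ π / 8 by positivity), pi_lt_d2]

/-- For real `n, m` in the stated ranges, `cos(π/m)/sin(π/n) ≥ 5/4`. -/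
theorem stmt_2 (n m : ℝ)
    (h : (4 ≤ n ∧ 7 ≤ m) ∨ (6 ≤ n ∧ 4 ≤ m) ∨ (8 ≤ n ∧ 3 ≤ m)) :
    Real.cos (π / m) / Real.sin (π / n) ≥ 5 / 4 := by
  rcases h with ⟨hn, hm⟩ | ⟨hn, hm⟩ | ⟨hn, hm⟩
  · exact five_div_four_le_cos_pi_div_seven_div_sin_pi_div_four.trans
      (cos_pi_div_div_sin_pi_div_le (by norm_num) (by norm_num) hn hm)
  · exact five_div_four_le_cos_pi_div_four_div_sin_pi_div_six.trans
      (cos_pi_div_div_sin_pi_div_le (by norm_num) (by norm_num) hn hm)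
  · exact five_div_four_le_cos_pi_div_three_div_sin_pi_div_eight.trans
      (cos_pi_div_div_sin_pi_div_le (by norm_num) (by norm_num) hn hm)
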